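/- Let q ∈ (−1,0) and let k ≥ 0 be an integer. Then C(2k,k) + 2 ∑_{r=1}^k (−1)^r C(2k, k−r) · q^{r−1}(1+q)² / ((1+q^{r+1})(1+q^{r−1})) = 2(1+q)/(1−q) · ∑_{r=0}^k (−1)^r C(2k+1, k−r) · (1−q^{2r+1}) / ((1+q^r)(1+q^{r+1})), where C(m,j) is the binomial coefficient and all denominators 1+q^s (s ≥ 0) are nonzero. -/

import Mathlib

/-!
With `a s = (1 + q ^ s)⁻¹`, the summands on the left are `(1 + q) / (q - 1) * (a (r - 1) - a (r + 1))`
and the rational factors on the right are `a r + a (r + 1) - 1`. Rewriting the binomial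
coefficients as `b r = C(2k, k + r)` (so that `C(2k+1, k-r) = b r + b (r + 1)` by Pascal's rule
and `b (k + 1) = 0`), the two alternating sums telescope against each other, leaving only
`b 0 * (a 0 + a 1 - 1) = C(2k, k) * (1 - q) / (2 * (1 + q))`.
-/

open Finset

theorem sum_Icc_alternating_add_sum_range_alternating {R : Type*} [CommRing R]
    (a b : ℕ → R) (k : ℕ) :
    ∑ r ∈ Icc 1 k, (-1 : R) ^ r * b r * (a (r - 1) - a (r + 1)) +
        ∑ r ∈ range (k + 1), (-1 : R) ^ r * (b r + b (r + 1)) * (a r + a (r + 1) - 1) =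
      b 0 * (a 0 + a 1 - 1) + (-1 : R) ^ k * b (k + 1) * (a k + a (k + 1) - 1) := by
  induction k with
  | zero => simp [add_mul]
  | succ k ih =>
    rw [sum_Icc_succ_top (by omega), sum_range_succ, add_add_add_comm, ih]
    simp only [Nat.add_sub_cancel, pow_succ]
    ring

theorem Nat.choose_two_mul_sub (k r : ℕ) (hr : r ≤ k) :
    (2 * k).choose (k - r) = (2 * k).choose (k + r) :=
  Nat.choose_symm_of_eq_add (by omega)

theorem Nat.choose_two_mul_add_one_sub (k r : ℕ) (hr : r ≤ k) :
    (2 * k + 1).choose (k - r) = (2 * k).choose (k + r) + (2 * k).choose (k + (r + 1)) := by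
  rw [Nat.choose_symm_of_eq_add (show 2 * k + 1 = k - r + (k + r + 1) by omega),
    Nat.choose_succ_succ', add_assoc]

section OneAddPow

variable {K : Type*} [Field K] {q : K}

theorem pow_mul_one_add_sq_div_eq_sub_inv (m : ℕ) (hq : q ≠ 1) (hm : 1 + q ^ m ≠ 0)
    (hm2 : 1 + q ^ (m + 2) ≠ 0) :
    q ^ m * (1 + q) ^ 2 / ((1 + q ^ (m + 2)) * (1 + q ^ m)) =
      (1 + q) / (q - 1) * ((1 + q ^ m)⁻¹ - (1 + q ^ (m + 2))⁻¹) := by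
  have : q - 1 ≠ 0 := sub_ne_zero.mpr hq
  field_simp
  ring

theorem one_sub_pow_div_eq_inv_add_inv (r : ℕ) (hr : 1 + q ^ r ≠ 0)
    (hr1 : 1 + q ^ (r + 1) ≠ 0) :
    (1 - q ^ (2 * r + 1)) / ((1 + q ^ r) * (1 + q ^ (r + 1))) =
      (1 + q ^ r)⁻¹ + (1 + q ^ (r + 1))⁻¹ - 1 := by
  field_simp
  ring

theorem sum_Icc_choose_mul_pow_mul_one_add_sq_div (k : ℕ) (hq : q ≠ 1)
    (hden : ∀ s : ℕ, 1 + q ^ s ≠ 0) :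
    ∑ r ∈ Icc 1 k, (-1 : K) ^ r * ((2 * k).choose (k - r) : K) *
        (q ^ (r - 1) * (1 + q) ^ 2 / ((1 + q ^ (r + 1)) * (1 + q ^ (r - 1)))) =
      (1 + q) / (q - 1) * ∑ r ∈ Icc 1 k, (-1 : K) ^ r * ((2 * k).choose (k + r) : K) *
        ((1 + q ^ (r - 1))⁻¹ - (1 + q ^ (r + 1))⁻¹) := by
  rw [mul_sum]
  refine sum_congr rfl fun r hr => ?_
  obtain ⟨m, rfl⟩ : ∃ m, r = m + 1 := ⟨r - 1, by grind⟩
  rw [Nat.choose_two_mul_sub k _ (mem_Icc.mp hr).2, Nat.add_sub_cancel,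
    pow_mul_one_add_sq_div_eq_sub_inv m hq (hden m) (hden (m + 2))]
  ring

theorem sum_range_choose_mul_one_sub_pow_div (k : ℕ) (hden : ∀ s : ℕ, 1 + q ^ s ≠ 0) :
    ∑ r ∈ range (k + 1), (-1 : K) ^ r * ((2 * k + 1).choose (k - r) : K) *
        ((1 - q ^ (2 * r + 1)) / ((1 + q ^ r) * (1 + q ^ (r + 1)))) =
      ∑ r ∈ range (k + 1), (-1 : K) ^ r *
        (((2 * k).choose (k + r) : K) + ((2 * k).choose (k + (r + 1)) : K)) *
        ((1 + q ^ r)⁻¹ + (1 + q ^ (r + 1))⁻¹ - 1) := by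
  refine sum_congr rfl fun r hr => ?_
  rw [Nat.choose_two_mul_add_one_sub k r (by grind),
    one_sub_pow_div_eq_inv_add_inv r (hden r) (hden (r + 1)), Nat.cast_add]

theorem choose_add_two_mul_sum_Icc_eq (k : ℕ) (hq : q ≠ 1) (hden : ∀ s : ℕ, 1 + q ^ s ≠ 0) :
    ((2 * k).choose k : K) +
        2 * ∑ r ∈ Icc 1 k, (-1 : K) ^ r * ((2 * k).choose (k - r) : K) *
          (q ^ (r - 1) * (1 + q) ^ 2 / ((1 + q ^ (r + 1)) * (1 + q ^ (r - 1)))) =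
      2 * (1 + q) / (1 - q) *
        ∑ r ∈ range (k + 1), (-1 : K) ^ r * ((2 * k + 1).choose (k - r) : K) *
          ((1 - q ^ (2 * r + 1)) / ((1 + q ^ r) * (1 + q ^ (r + 1)))) := by
  have htel := sum_Icc_alternating_add_sum_range_alternating
    (fun s => (1 + q ^ s)⁻¹) (fun r => ((2 * k).choose (k + r) : K)) k
  have hchoose : (2 * k).choose (k + (k + 1)) = 0 := Nat.choose_eq_zero_of_lt (by omega)
  have hq' : q - 1 ≠ 0 := sub_ne_zero.mpr hq
  have h2 : (2 : K) ≠ 0 := by simpa [one_add_one_eq_two] using hden 0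
  have h1q : 1 + q ≠ 0 := by simpa using hden 1
  simp only [hchoose, Nat.cast_zero, mul_zero, zero_mul, add_zero, pow_zero, pow_one,
    one_add_one_eq_two] at htel
  rw [sum_Icc_choose_mul_pow_mul_one_add_sq_div k hq hden,
    sum_range_choose_mul_one_sub_pow_div k hden]
  linear_combination (norm := skip) (2 * (1 + q) / (q - 1)) * htel
  field_simp
  ring

end OneAddPow

theorem one_add_pow_pos {q : ℝ} (hq : |q| < 1) (s : ℕ) : 0 < 1 + q ^ s := by
  rcases s.eq_zero_or_pos with rfl | hs
  · norm_num
  · have : |q ^ s| < 1 := by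
      rw [abs_pow]
      exact pow_lt_one₀ (abs_nonneg q) hq hs.ne'
    linarith [neg_abs_le (q ^ s)]

theorem stmt17 (q : ℝ) (hq : q ∈ Set.Ioo (-1 : ℝ) 0) (k : ℕ) :
    (Nat.choose (2 * k) k : ℝ) +
        2 * ∑ r ∈ Finset.Icc 1 k, (-1 : ℝ) ^ r * (Nat.choose (2 * k) (k - r) : ℝ) *
          (q ^ (r - 1) * (1 + q) ^ 2 / ((1 + q ^ (r + 1)) * (1 + q ^ (r - 1)))) =
      2 * (1 + q) / (1 - q) *
        ∑ r ∈ Finset.range (k + 1), (-1 : ℝ) ^ r * (Nat.choose (2 * k + 1) (k - r) : ℝ) *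
          ((1 - q ^ (2 * r + 1)) / ((1 + q ^ r) * (1 + q ^ (r + 1)))) := by
  have hq_lt_one : q < 1 := hq.2.trans zero_lt_one
  exact choose_add_two_mul_sum_Icc_eq k hq_lt_one.ne
    fun s => (one_add_pow_pos (abs_lt.mpr ⟨hq.1, hq_lt_one⟩) s).ne'
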